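/- For 1 ≤ m < n, let S₁ = {a, t, t⁻¹} in BS(m,n) = ⟨a, t ∣ t aᵐ t⁻¹ = aⁿ⟩. Then an element g of BS(m,n) lies in the submonoid generated by S₁ if and only if the irreducible normal form of g with respect to the complete rewriting system {aA→1, Aa→1, tT→1, Tt→1, aⁿt→taᵐ, At→aⁿ⁻¹tAᵐ, aᵐT→Taⁿ, AT→aᵐ⁻¹TAⁿ} is a word over {a, t, T} only (contains no occurrence of A). -/

import Mathlib

/-- Defining relator of `BS(m,n) = ⟨a, t ∣ t aᵐ t⁻¹ = aⁿ⟩`, with `a = of 0`, `t = of 1`. -/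
def bsRel (m n : ℕ) : Set (FreeGroup (Fin 2)) :=
  {FreeGroup.of 1 * FreeGroup.of 0 ^ m * (FreeGroup.of 1)⁻¹ * (FreeGroup.of 0 ^ n)⁻¹}

/-- The rewriting rules over the alphabet `Fin 4` where `0 = a`, `1 = A = a⁻¹`,
`2 = t`, `3 = T = t⁻¹`. -/
def bsRules (m n : ℕ) : Set (List (Fin 4) × List (Fin 4)) :=
  { ([0, 1], []), ([1, 0], []), ([2, 3], []), ([3, 2], []),
    (List.replicate n 0 ++ [2], 2 :: List.replicate m 0),
    ([1, 2], List.replicate (n - 1) 0 ++ 2 :: List.replicate m 1),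
    (List.replicate m 0 ++ [3], 3 :: List.replicate n 0),
    ([1, 3], List.replicate (m - 1) 0 ++ 3 :: List.replicate n 1) }

/-- One-step rewriting relation generated by the rules. -/
def bsRw (m n : ℕ) (w₁ w₂ : List (Fin 4)) : Prop :=
  ∃ l r u v, (u, v) ∈ bsRules m n ∧ w₁ = l ++ u ++ r ∧ w₂ = l ++ v ++ r

/-- Evaluation of a word over `{a, A, t, T}` in `BS(m,n)`. -/
def bsEval (m n : ℕ) (w : List (Fin 4)) : PresentedGroup (bsRel m n) :=
  (w.map (fun i =>
    if i = 0 then PresentedGroup.of 0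
    else if i = 1 then (PresentedGroup.of 0)⁻¹
    else if i = 2 then PresentedGroup.of 1
    else (PresentedGroup.of 1)⁻¹)).prod

/-!
`BS(m, n)` is the HNN extension of `ℤ = ⟨a⟩` in which `t` conjugates `mℤ` onto `nℤ`. A word over
`{a, t, T}` containing none of `aⁿt`, `aᵐT`, `tT`, `Tt` is `a^c₁ t^u₁ ⋯ a^cₖ t^uₖ a^d` with each
`cᵢ` below `n` or `m` according to `uᵢ`; read as a reduced HNN word, Britton's lemma shows that it
is determined by its value. Every positive word can be brought to such a form one letter at a time
from the right.

An irreducible word containing `A` is `p Aᵏ⁺¹` with `p` positive, since `A` can only be followed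
by `A`. If it equalled a positive word `q`, then `p = q aᵏ⁺¹`; but `p` is its own normal form and
that of `q aᵏ⁺¹` ends in `a`, so `p Aᵏ⁺¹` would contain `aA`.
-/

lemma List.exists_eq_append_replicate_of_not_infix {α : Type*} {a : α} {w : List α}
    (h : ∀ x, x ≠ a → ¬ [a, x] <:+: w) : ∃ p k, w = p ++ List.replicate k a ∧ a ∉ p := by
  induction w with
  | nil => exact ⟨[], 0, rfl, List.not_mem_nil⟩
  | cons x w ih =>
    obtain ⟨p, k, rfl, hp⟩ :=
      ih fun y hy hinfix => h y hy (hinfix.trans (List.suffix_cons x _).isInfix)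
    by_cases hx : x = a
    · subst hx
      rcases p with _ | ⟨y, p⟩
      · exact ⟨[], k + 1, rfl, List.not_mem_nil⟩
      · refine absurd ⟨[], p ++ List.replicate k x, rfl⟩ (h y fun hy => hp ?_)
        simp [hy]
    · exact ⟨x :: p, k, rfl, by simp [Ne.symm hx, hp]⟩

open Multiplicative

namespace BaumslagSolitar

/-- In a normal form, the `a`-block in front of `t ^ u` is shorter than `bound m n u`. -/
def bound (m n : ℕ) (u : ℤˣ) : ℕ := if u = 1 then n else m

@[simp] lemma bound_one (m n : ℕ) : bound m n 1 = n := rfl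

@[simp] lemma bound_neg_one (m n : ℕ) : bound m n (-1) = m := if_neg (by decide)

lemma bound_pos {m n : ℕ} [NeZero m] [NeZero n] (u : ℤˣ) : 0 < bound m n u := by
  unfold bound; split <;> exact Nat.pos_of_neZero _

lemma pow_bound_mul_zpow_unit {G : Type*} [Group G] {a t : G} {m n : ℕ}
    (h : t * a ^ m * t⁻¹ = a ^ n) (u : ℤˣ) (k : ℕ) :
    a ^ (bound m n u * k) * t ^ (u : ℤ) = t ^ (u : ℤ) * a ^ (bound m n (-u) * k) := by
  have hsemi : SemiconjBy t ((a ^ m) ^ k) ((a ^ n) ^ k) :=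
    SemiconjBy.pow_right (eq_mul_of_mul_inv_eq h) k
  rcases Int.units_eq_one_or u with rfl | rfl
  · simpa [pow_mul] using hsemi.eq.symm
  · simpa [pow_mul] using (SemiconjBy.inv_symm_left_iff.mpr hsemi).eq.symm

def tLetter (u : ℤˣ) : Fin 4 := if u = 1 then 2 else 3

lemma eq_zero_or_eq_tLetter {x : Fin 4} (hx : x ≠ 1) : x = 0 ∨ ∃ u, tLetter u = x := by
  fin_cases x
  · exact Or.inl rfl
  · exact absurd rfl hx
  · exact Or.inr ⟨1, rfl⟩
  · exact Or.inr ⟨-1, rfl⟩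

section Eval

variable (m n : ℕ)

@[simp] lemma bsEval_append (v w : List (Fin 4)) :
    bsEval m n (v ++ w) = bsEval m n v * bsEval m n w := by
  simp [bsEval]

@[simp] lemma bsEval_replicate_zero (c : ℕ) :
    bsEval m n (List.replicate c 0) = PresentedGroup.of 0 ^ c := by
  simp [bsEval, List.map_replicate]

@[simp] lemma bsEval_replicate_one (c : ℕ) :
    bsEval m n (List.replicate c 1) = (PresentedGroup.of 0)⁻¹ ^ c := by
  simp [bsEval, List.map_replicate]

@[simp] lemma bsEval_tLetter (u : ℤˣ) :
    bsEval m n [tLetter u] = PresentedGroup.of 1 ^ (u : ℤ) := by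
  rcases Int.units_eq_one_or u with rfl | rfl <;> simp [bsEval, tLetter]

lemma bsEval_relator :
    PresentedGroup.of 1 * PresentedGroup.of 0 ^ m * (PresentedGroup.of 1)⁻¹ =
      (PresentedGroup.of 0 ^ n : PresentedGroup (bsRel m n)) :=
  PresentedGroup.mk_eq_mk_of_mul_inv_mem (rfl : _ ∈ bsRel m n)

end Eval

section Blocks

variable {m n : ℕ}

/-- The word `a ^ c₁ t ^ u₁ ⋯ a ^ cₖ t ^ uₖ a ^ d` of `l = [(c₁, u₁), …, (cₖ, uₖ)]`. -/
def blocksWord (l : List (ℕ × ℤˣ)) (d : ℕ) : List (Fin 4) :=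
  l.flatMap (fun b => List.replicate b.1 0 ++ [tLetter b.2]) ++ List.replicate d 0

/-- The block lists of words over `{a, t, T}` to which none of the rules
`aⁿt → taᵐ`, `aᵐT → Taⁿ`, `tT → 1`, `Tt → 1` applies. -/
def IsNormal (m n : ℕ) (l : List (ℕ × ℤˣ)) : Prop :=
  (∀ b ∈ l, b.1 < bound m n b.2) ∧ l.IsChain (fun b b' => b'.1 = 0 → b'.2 = b.2)

lemma isNormal_nil : IsNormal m n [] := ⟨by simp, .nil⟩

lemma IsNormal.tail {b : ℕ × ℤˣ} {l : List (ℕ × ℤˣ)} (h : IsNormal m n (b :: l)) :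
    IsNormal m n l :=
  ⟨fun b' hb' => h.1 b' (List.mem_cons_of_mem _ hb'), (List.isChain_cons.mp h.2).2⟩

lemma isNormal_concat_iff {l : List (ℕ × ℤˣ)} {b : ℕ × ℤˣ} :
    IsNormal m n (l ++ [b]) ↔
      IsNormal m n l ∧ b.1 < bound m n b.2 ∧ ∀ b' ∈ l.getLast?, b.1 = 0 → b.2 = b'.2 := by
  simp only [IsNormal, List.mem_append, List.mem_singleton, List.isChain_append,
    List.isChain_singleton, List.head?_cons, Option.mem_def, Option.some.injEq, true_and]
  constructor
  · rintro ⟨hlt, hchain, hlast⟩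
    exact ⟨⟨fun b' hb' => hlt b' (Or.inl hb'), hchain⟩, hlt b (Or.inr rfl),
      fun b' hb' => hlast b' hb' b rfl⟩
  · rintro ⟨⟨hlt, hchain⟩, hb, hlast⟩
    refine ⟨?_, hchain, fun b' hb' _ h => h ▸ hlast b' hb'⟩
    rintro b' (hb' | rfl)
    exacts [hlt b' hb', hb]

lemma blocksWord_nil (d : ℕ) : blocksWord [] d = List.replicate d 0 := rfl

lemma blocksWord_cons (b : ℕ × ℤˣ) (l : List (ℕ × ℤˣ)) (d : ℕ) :
    blocksWord (b :: l) d = List.replicate b.1 0 ++ [tLetter b.2] ++ blocksWord l d := by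
  simp [blocksWord]

lemma blocksWord_concat (l : List (ℕ × ℤˣ)) (c : ℕ) (u : ℤˣ) (d : ℕ) :
    blocksWord (l ++ [(c, u)]) d = blocksWord l c ++ [tLetter u] ++ List.replicate d 0 := by
  simp [blocksWord]

lemma blocksWord_add (l : List (ℕ × ℤˣ)) (d k : ℕ) :
    blocksWord l (d + k) = blocksWord l d ++ List.replicate k 0 := by
  rw [blocksWord, blocksWord, List.replicate_add, List.append_assoc]

end Blocks

section Existence

variable {m n : ℕ} [NeZero m] [NeZero n]

lemma exists_isNormal_bsEval_eq_append_tLetter {l : List (ℕ × ℤˣ)} (hl : IsNormal m n l)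
    (d : ℕ) (u : ℤˣ) : ∃ l' d', IsNormal m n l' ∧
      bsEval m n (blocksWord l' d') = bsEval m n (blocksWord l d ++ [tLetter u]) := by
  have hrel := pow_bound_mul_zpow_unit (bsEval_relator m n) u (d / bound m n u)
  set b := bound m n u
  have hd : blocksWord l d = blocksWord l (d % b) ++ List.replicate (b * (d / b)) 0 := by
    rw [← blocksWord_add, Nat.mod_add_div]
  by_cases hpinch : d % b = 0 ∧ ∃ l₀ c, l = l₀ ++ [(c, -u)]
  · -- `t⁻ᵘ aᵇᵏ tᵘ` is a power of `a`, which joins the last `a`-block.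
    obtain ⟨hr, l₀, c, rfl⟩ := hpinch
    refine ⟨l₀, c + bound m n (-u) * (d / b), (isNormal_concat_iff.mp hl).1, ?_⟩
    rw [hd, hr, blocksWord_concat, blocksWord_add]
    simp only [List.replicate_zero, List.append_nil, bsEval_append, bsEval_replicate_zero,
      bsEval_tLetter, mul_assoc, hrel]
    rw [← mul_assoc (_ ^ ((-u : ℤˣ) : ℤ)), ← zpow_add, Units.val_neg, neg_add_cancel, zpow_zero,
      one_mul]
  · refine ⟨l ++ [(d % b, u)], bound m n (-u) * (d / b),
      isNormal_concat_iff.mpr ⟨hl, Nat.mod_lt _ (bound_pos u), fun b' hb' hr => ?_⟩, ?_⟩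
    · by_contra hne
      refine hpinch ⟨hr, l.dropLast, b'.1, ?_⟩
      rw [← Int.units_ne_iff_eq_neg.mp (Ne.symm hne), List.dropLast_append_getLast? b' hb']
    · rw [hd, blocksWord_concat]
      simp only [bsEval_append, bsEval_replicate_zero, bsEval_tLetter, mul_assoc, hrel]

lemma exists_isNormal_bsEval_eq {q : List (Fin 4)} (hq : (1 : Fin 4) ∉ q) :
    ∃ l d, IsNormal m n l ∧ bsEval m n (blocksWord l d) = bsEval m n q := by
  induction q using List.reverseRecOn with
  | nil => exact ⟨[], 0, isNormal_nil, rfl⟩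
  | append_singleton q x ih =>
    obtain ⟨l, d, hl, hlq⟩ := ih fun h => hq (List.mem_append_left _ h)
    rw [bsEval_append, ← hlq, ← bsEval_append]
    rcases eq_zero_or_eq_tLetter (x := x) fun h => hq (by simp [h]) with rfl | ⟨u, rfl⟩
    · exact ⟨l, d + 1, hl, by rw [blocksWord_add]; rfl⟩
    · exact exists_isNormal_bsEval_eq_append_tLetter hl d u

end Existence

section Irreducible

variable {m n : ℕ}

def IsIrreducible (m n : ℕ) (w : List (Fin 4)) : Prop :=
  ∀ r ∈ bsRules m n, ¬ r.1 <:+: w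

lemma isIrreducible_of_not_exists_bsRw {w : List (Fin 4)} (h : ¬ ∃ w', bsRw m n w w') :
    IsIrreducible m n w := by
  rintro ⟨u, v⟩ hr ⟨l, r, rfl⟩
  exact h ⟨l ++ v ++ r, l, r, u, v, hr, rfl, rfl⟩

namespace IsIrreducible

variable {v w : List (Fin 4)}

lemma mono (h : IsIrreducible m n w) (hv : v <:+: w) : IsIrreducible m n v :=
  fun r hr hrv => h r hr (hrv.trans hv)

lemma not_infix_pair (h : IsIrreducible m n w) {x : Fin 4} (hx : x ≠ 1) : ¬ [1, x] <:+: w := by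
  fin_cases x
  · exact h ([1, 0], []) (by simp [bsRules])
  · exact absurd rfl hx
  · exact h ([1, 2], List.replicate (n - 1) 0 ++ 2 :: List.replicate m 1) (by simp [bsRules])
  · exact h ([1, 3], List.replicate (m - 1) 0 ++ 3 :: List.replicate n 1) (by simp [bsRules])

lemma not_infix_tLetter_neg_tLetter (h : IsIrreducible m n w) (u : ℤˣ) :
    ¬ [tLetter (-u), tLetter u] <:+: w := by
  rcases Int.units_eq_one_or u with rfl | rfl
  · exact h ([3, 2], []) (by simp [bsRules])
  · exact h ([2, 3], []) (by simp [bsRules])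

lemma not_infix_replicate_tLetter (h : IsIrreducible m n w) (u : ℤˣ) :
    ¬ (List.replicate (bound m n u) 0 ++ [tLetter u]) <:+: w := by
  rcases Int.units_eq_one_or u with rfl | rfl
  · exact h (_, 2 :: List.replicate m 0) (by simp [bsRules, tLetter])
  · exact h (_, 3 :: List.replicate n 0) (by simp [bsRules, tLetter])

lemma exists_isNormal_blocksWord_eq (h : IsIrreducible m n w) (hw : (1 : Fin 4) ∉ w) :
    ∃ l d, IsNormal m n l ∧ blocksWord l d = w := by
  induction w using List.reverseRecOn with
  | nil => exact ⟨[], 0, isNormal_nil, rfl⟩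
  | append_singleton w x ih =>
    obtain ⟨l, d, hl, rfl⟩ :=
      ih (h.mono (List.prefix_append _ _).isInfix) fun hmem => hw (List.mem_append_left _ hmem)
    rcases eq_zero_or_eq_tLetter (x := x) fun hx => hw (by simp [hx]) with rfl | ⟨u, rfl⟩
    · exact ⟨l, d + 1, hl, blocksWord_add l d 1⟩
    refine ⟨l ++ [(d, u)], 0, isNormal_concat_iff.mpr ⟨hl, ?_, fun b' hb' hd => ?_⟩,
      by simp [blocksWord_concat]⟩
    · by_contra! hle
      dsimp only at hle
      apply h.not_infix_replicate_tLetter u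
      rw [← Nat.sub_add_cancel hle, blocksWord_add, List.append_assoc]
      exact (List.suffix_append _ _).isInfix
    · by_contra hne
      dsimp only at hd hne
      apply h.not_infix_tLetter_neg_tLetter u
      rw [hd, ← List.dropLast_append_getLast? b' hb', ← Int.units_ne_iff_eq_neg.mp (Ne.symm hne),
        blocksWord_concat]
      exact ⟨blocksWord l.dropLast b'.1, [], by simp⟩

end IsIrreducible

end Irreducible

section HNN

open HNNExtension

/-- The subgroup `kℤ` of `ℤ`, written multiplicatively. -/
abbrev intMultiples (k : ℤ) : Subgroup (Multiplicative ℤ) := (zpowGroupHom k).range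

lemma ofAdd_mem_intMultiples_iff {k z : ℤ} : ofAdd z ∈ intMultiples k ↔ k ∣ z := by
  rw [MonoidHom.mem_range]
  constructor
  · rintro ⟨x, hx⟩
    exact ⟨toAdd x, by simpa [mul_comm] using congrArg toAdd hx.symm⟩
  · rintro ⟨c, rfl⟩
    exact ⟨ofAdd c, by rw [zpowGroupHom_apply, ← ofAdd_zsmul, smul_eq_mul, mul_comm]⟩

variable {m n : ℕ}

lemma ofAdd_mem_toSubgroup_iff (u : ℤˣ) (z : ℤ) :
    ofAdd z ∈ toSubgroup (intMultiples m) (intMultiples n) u ↔ (bound m n (-u) : ℤ) ∣ z := by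
  rcases Int.units_eq_one_or u with rfl | rfl
  · rw [toSubgroup_one, bound_neg_one]
    exact ofAdd_mem_intMultiples_iff
  · rw [toSubgroup_neg_one, neg_neg, bound_one]
    exact ofAdd_mem_intMultiples_iff

/-- The head of the reduced HNN word of `blocksWord l d`: its first `a`-exponent. -/
def hnnHead : List (ℕ × ℤˣ) → ℕ → Multiplicative ℤ
  | [], d => ofAdd (d : ℤ)
  | b :: _, _ => ofAdd (b.1 : ℤ)

/-- The letters `(uᵢ, a ^ cᵢ₊₁)` of the reduced HNN word of `blocksWord l d`. -/
def hnnLetters : List (ℕ × ℤˣ) → ℕ → List (ℤˣ × Multiplicative ℤ)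
  | [], _ => []
  | b :: l, d => (b.2, hnnHead l d) :: hnnLetters l d

lemma map_fst_hnnLetters (l : List (ℕ × ℤˣ)) (d : ℕ) :
    (hnnLetters l d).map Prod.fst = l.map Prod.snd := by
  induction l with
  | nil => rfl
  | cons b l ih => simp [hnnLetters, ih]

lemma isChain_hnnLetters {l : List (ℕ × ℤˣ)} (hl : IsNormal m n l) (d : ℕ) :
    (hnnLetters l d).IsChain
      (fun x y => x.2 ∈ toSubgroup (intMultiples m) (intMultiples n) x.1 → x.1 = y.1) := by
  induction l with
  | nil => exact .nil
  | cons b l ih =>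
    rcases l with _ | ⟨b', l⟩
    · exact .singleton _
    refine List.isChain_cons_cons.mpr ⟨fun hmem => ?_, ih hl.tail⟩
    by_contra hne
    -- `tᵘ aᶜ t⁻ᵘ` with `c` below the bound of `t⁻ᵘ` is a pinch only if `c = 0`.
    have hb' : b'.2 = -b.2 := Int.units_ne_iff_eq_neg.mp (Ne.symm hne)
    rw [hnnHead, ofAdd_mem_toSubgroup_iff, ← hb', Int.natCast_dvd_natCast] at hmem
    have hzero := Nat.eq_zero_of_dvd_of_lt hmem (hl.1 b' (by simp))
    exact hne ((List.isChain_cons_cons.mp hl.2).1 hzero).symm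

def toReducedWord {l : List (ℕ × ℤˣ)} (hl : IsNormal m n l) (d : ℕ) :
    NormalWord.ReducedWord (Multiplicative ℤ) (intMultiples m) (intMultiples n) :=
  ⟨hnnHead l d, hnnLetters l d, isChain_hnnLetters hl d⟩

lemma ofAdd_one_pow (k : ℕ) : (ofAdd 1 : Multiplicative ℤ) ^ k = ofAdd (k : ℤ) := by
  rw [← ofAdd_nsmul, nsmul_one]

variable (m n : ℕ) [NeZero m] [NeZero n]

lemma zpowGroupHom_natCast_injective (k : ℕ) [NeZero k] :
    Function.Injective (zpowGroupHom (k : ℤ) : Multiplicative ℤ →* Multiplicative ℤ) :=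
  zpow_left_injective (Int.natCast_ne_zero.mpr (NeZero.ne k))

/-- The isomorphism `mℤ ≃ nℤ`, `m k ↦ n k`. -/
noncomputable def scaleEquiv : intMultiples m ≃* intMultiples n :=
  (MonoidHom.ofInjective (zpowGroupHom_natCast_injective m)).symm.trans
    (MonoidHom.ofInjective (zpowGroupHom_natCast_injective n))

/-- `BS(m, n)` as the HNN extension of `ℤ` conjugating `mℤ` to `nℤ`. -/
abbrev BSHNN := HNNExtension (Multiplicative ℤ) (intMultiples m) (intMultiples n) (scaleEquiv m n)

lemma t_mul_of_ofAdd :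
    (t * of (ofAdd (m : ℤ)) : BSHNN m n) = of (ofAdd (n : ℤ)) * t := by
  let g : intMultiples m := MonoidHom.ofInjective (zpowGroupHom_natCast_injective m) (ofAdd 1)
  have hg : (g : Multiplicative ℤ) = ofAdd (m : ℤ) := by
    simp [g, MonoidHom.ofInjective_apply, ofAdd_one_pow]
  have hφg : (scaleEquiv m n g : Multiplicative ℤ) = ofAdd (n : ℤ) := by
    simp [g, scaleEquiv, MonoidHom.ofInjective_apply, ofAdd_one_pow]
  rw [← hg, ← hφg]
  exact t_mul_of g

noncomputable def toBSHNN : PresentedGroup (bsRel m n) →* BSHNN m n :=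
  PresentedGroup.toGroup (f := ![of (ofAdd 1), t]) <| by
    rintro r rfl
    simp only [map_mul, map_inv, map_pow, FreeGroup.lift_apply_of]
    simp [← map_pow, ofAdd_one_pow, t_mul_of_ofAdd]

@[simp] lemma toBSHNN_bsEval_replicate_zero (c : ℕ) :
    toBSHNN m n (bsEval m n (List.replicate c 0)) = of (ofAdd (c : ℤ)) := by
  rw [bsEval_replicate_zero, map_pow, toBSHNN, PresentedGroup.toGroup.of, Matrix.cons_val_zero,
    ← map_pow, ofAdd_one_pow]

@[simp] lemma toBSHNN_bsEval_tLetter (u : ℤˣ) :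
    toBSHNN m n (bsEval m n [tLetter u]) = t ^ (u : ℤ) := by
  simp [toBSHNN]

variable {m n}

lemma toReducedWord_prod {l : List (ℕ × ℤˣ)} (hl : IsNormal m n l) (d : ℕ) :
    (toReducedWord hl d).prod (scaleEquiv m n) = toBSHNN m n (bsEval m n (blocksWord l d)) := by
  simp only [toReducedWord, NormalWord.ReducedWord.prod]
  clear hl
  induction l with
  | nil =>
    rw [blocksWord_nil, toBSHNN_bsEval_replicate_zero]
    simp [hnnHead, hnnLetters]
  | cons b l ih =>
    rw [blocksWord_cons, bsEval_append, bsEval_append, map_mul, map_mul,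
      toBSHNN_bsEval_replicate_zero, toBSHNN_bsEval_tLetter, ← ih]
    simp only [hnnLetters, List.map_cons, List.prod_cons, mul_assoc]
    rfl

lemma map_snd_eq_and_dvd_of_bsEval_blocksWord_eq {l l' : List (ℕ × ℤˣ)} {d d' : ℕ}
    (hl : IsNormal m n l) (hl' : IsNormal m n l')
    (h : bsEval m n (blocksWord l d) = bsEval m n (blocksWord l' d')) :
    l.map Prod.snd = l'.map Prod.snd ∧
      ∀ b ∈ l.head?, ∀ b' ∈ l'.head?, (bound m n b.2 : ℤ) ∣ b'.1 - b.1 := by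
  have hprod : (toReducedWord hl d).prod (scaleEquiv m n) = (toReducedWord hl' d').prod _ := by
    rw [toReducedWord_prod, toReducedWord_prod, h]
  obtain ⟨hfst, hhead⟩ := ReducedWord.map_fst_eq_and_of_prod_eq _ hprod
  simp only [toReducedWord, map_fst_hnnLetters] at hfst hhead
  refine ⟨hfst, ?_⟩
  rintro ⟨c, u⟩ hb ⟨c', u'⟩ hb'
  rcases l with _ | ⟨_, l⟩ <;> rcases l' with _ | ⟨_, l'⟩ <;> simp only [List.head?_nil,
    List.head?_cons, Option.mem_def, reduceCtorEq, Option.some.injEq] at hb hb'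
  subst hb hb'
  have := hhead u (by simp [hnnLetters])
  rwa [hnnHead, hnnHead, ← ofAdd_neg, ← ofAdd_add, neg_add_eq_sub, ofAdd_mem_toSubgroup_iff,
    neg_neg] at this

theorem eq_of_bsEval_blocksWord_eq {l l' : List (ℕ × ℤˣ)} {d d' : ℕ} (hl : IsNormal m n l)
    (hl' : IsNormal m n l') (h : bsEval m n (blocksWord l d) = bsEval m n (blocksWord l' d')) :
    l = l' ∧ d = d' := by
  induction l generalizing l' with
  | nil =>
    obtain rfl : l' = [] :=
      List.map_eq_nil_iff.mp (map_snd_eq_and_dvd_of_bsEval_blocksWord_eq hl hl' h).1.symm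
    have := congrArg (toBSHNN m n) h
    simp only [blocksWord_nil, toBSHNN_bsEval_replicate_zero] at this
    exact ⟨rfl, by exact_mod_cast ofAdd.injective (of_injective _ this)⟩
  | cons b l ih =>
    obtain ⟨hsnd, hdvd⟩ := map_snd_eq_and_dvd_of_bsEval_blocksWord_eq hl hl' h
    rcases l' with _ | ⟨b', l'⟩
    · simp at hsnd
    simp only [List.map_cons, List.cons.injEq] at hsnd
    have hfst : b.1 = b'.1 := by
      refine Nat.ModEq.eq_of_lt_of_lt (Nat.modEq_iff_dvd.mpr (hdvd b rfl b' rfl))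
        (hl.1 b (by simp)) ?_
      rw [hsnd.1]
      exact hl'.1 b' (by simp)
    obtain rfl : b = b' := Prod.ext hfst hsnd.1
    rw [blocksWord_cons, blocksWord_cons, bsEval_append,
      bsEval_append m n _ (blocksWord l' d')] at h
    obtain ⟨rfl, rfl⟩ := ih hl.tail hl'.tail (mul_left_cancel h)
    exact ⟨rfl, rfl⟩

end HNN

lemma mem_closure_iff_exists_bsEval_eq (m n : ℕ) (x : PresentedGroup (bsRel m n)) :
    x ∈ Submonoid.closure
        ({PresentedGroup.of 0, PresentedGroup.of 1, (PresentedGroup.of 1)⁻¹} : Set _) ↔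
      ∃ q, (1 : Fin 4) ∉ q ∧ bsEval m n q = x := by
  constructor
  · intro hx
    induction hx using Submonoid.closure_induction with
    | mem y hy =>
      rcases hy with rfl | rfl | rfl
      · exact ⟨[0], by decide, by simp [bsEval]⟩
      · exact ⟨[2], by decide, by simp [bsEval]⟩
      · exact ⟨[3], by decide, by simp [bsEval]⟩
    | one => exact ⟨[], List.not_mem_nil, rfl⟩
    | mul y z _ _ hy hz =>
      obtain ⟨q, hq, rfl⟩ := hy
      obtain ⟨q', hq', rfl⟩ := hz
      exact ⟨q ++ q', by simp [hq, hq'], bsEval_append m n q q'⟩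
  · rintro ⟨q, hq, rfl⟩
    refine list_prod_mem fun y hy => Submonoid.subset_closure ?_
    obtain ⟨x, hx, rfl⟩ := List.mem_map.mp hy
    fin_cases x <;> simp_all

lemma bsEval_ne_of_isIrreducible {m n : ℕ} [NeZero m] [NeZero n] {p q : List (Fin 4)} {k : ℕ}
    (hirr : IsIrreducible m n (p ++ List.replicate (k + 1) 1)) (hp : (1 : Fin 4) ∉ p)
    (hq : (1 : Fin 4) ∉ q) : bsEval m n q ≠ bsEval m n (p ++ List.replicate (k + 1) 1) := by
  intro h
  obtain ⟨l, d, hl, hlq⟩ := exists_isNormal_bsEval_eq (m := m) (n := n) hq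
  obtain ⟨l', d', hl', rfl⟩ :=
    (hirr.mono (List.prefix_append _ _).isInfix).exists_isNormal_blocksWord_eq hp
  have heval : bsEval m n (blocksWord l (d + (k + 1))) = bsEval m n (blocksWord l' d') := by
    rw [blocksWord_add, bsEval_append, hlq, h, bsEval_append, mul_assoc, bsEval_replicate_zero,
      bsEval_replicate_one, inv_pow, inv_mul_cancel, mul_one]
  obtain ⟨rfl, rfl⟩ := eq_of_bsEval_blocksWord_eq hl hl' heval
  refine hirr ([0, 1], []) (by simp [bsRules]) ⟨blocksWord l (d + k), List.replicate k 1, ?_⟩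
  rw [← add_assoc, blocksWord_add l (d + k) 1]
  simp [List.replicate_succ]

end BaumslagSolitar

open BaumslagSolitar

/-- For `1 ≤ m < n`, an element of `BS(m,n)` lies in the submonoid generated
by `S₁ = {a, t, t⁻¹}` if and only if its irreducible normal form (with respect to the
complete rewriting system above) contains no occurrence of the letter `A = a⁻¹`. -/
theorem stmt8 (m n : ℕ) (hm : 1 ≤ m) (hmn : m < n) (w : List (Fin 4))
    (hirr : ¬ ∃ w', bsRw m n w w') :
    bsEval m n w ∈ Submonoid.closure
        ({PresentedGroup.of 0, PresentedGroup.of 1, (PresentedGroup.of 1)⁻¹} :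
          Set (PresentedGroup (bsRel m n))) ↔ (1 : Fin 4) ∉ w := by
  have : NeZero m := ⟨by omega⟩
  have : NeZero n := ⟨by omega⟩
  have hw := isIrreducible_of_not_exists_bsRw hirr
  obtain ⟨p, k, rfl, hp⟩ :=
    List.exists_eq_append_replicate_of_not_infix fun x hx => hw.not_infix_pair hx
  rw [mem_closure_iff_exists_bsEval_eq]
  refine ⟨fun ⟨q, hq, hqw⟩ => ?_, fun h => ⟨_, h, rfl⟩⟩
  rcases k with _ | k
  · simpa using hp
  · exact absurd hqw (bsEval_ne_of_isIrreducible hw hp hq)
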